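/- arXiv:2310.00509 — 2 statements merged into one kernel-verified Lean document; each statement's English description precedes it below -/
import Mathlib

section
/- Let k, N, q be natural numbers, let M be a symmetric positive semidefinite real (k+N)×(k+N) matrix, d ∈ ℝ^{k+N}, P₁ a real q×(k+N) matrix, c₁ ∈ ℝ^q, and let s_min, s_max ∈ ℝ^q. Let S ⊆ ℝ^N be a finite nonempty set and let W = convexHull ℝ S. For any x_d ∈ ℝ^k and t ∈ ℝ, writing z(ε) = col(x_d, ε) ∈ ℝ^{k+N}, the following are equivalent: (i) for every ε ∈ W, z(ε)ᵀ M z(ε) + dᵀ z(ε) ≤ t and s_min ≤ P₁ z(ε) + c₁ ≤ s_max (componentwise); (ii) for every vertex ω ∈ S, z(ω)ᵀ M z(ω) + dᵀ z(ω) ≤ t and s_min ≤ P₁ z(ω) + c₁ ≤ s_max (componentwise). -/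
open Matrix

private lemma quad_aux (a b Qu Qv c du dv t : ℝ) (ha : 0 ≤ a) (hb : 0 ≤ b)
    (hab : a + b = 1) (hpsd : 0 ≤ Qu - 2 * c + Qv)
    (h1 : Qu + du ≤ t) (h2 : Qv + dv ≤ t) :
    a * a * Qu + 2 * a * b * c + b * b * Qv + (a * du + b * dv) ≤ t := by
  have hb' : b = 1 - a := by linarith
  subst hb'
  nlinarith [mul_le_mul_of_nonneg_left h1 ha, mul_le_mul_of_nonneg_left h2 hb,
    mul_nonneg (mul_nonneg ha hb) hpsd]

private lemma lo_aux (a b x y lo : ℝ) (ha : 0 ≤ a) (hb : 0 ≤ b) (hab : a + b = 1)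
    (h1 : lo ≤ x) (h2 : lo ≤ y) : lo ≤ a * x + b * y := by
  have : (a + b) * lo ≤ a * x + b * y := by
    rw [add_mul]
    exact add_le_add (mul_le_mul_of_nonneg_left h1 ha) (mul_le_mul_of_nonneg_left h2 hb)
  rwa [hab, one_mul] at this

private lemma hi_aux (a b x y hi : ℝ) (ha : 0 ≤ a) (hb : 0 ≤ b) (hab : a + b = 1)
    (h1 : x ≤ hi) (h2 : y ≤ hi) : a * x + b * y ≤ hi := by
  have : a * x + b * y ≤ (a + b) * hi := by
    rw [add_mul]
    exact add_le_add (mul_le_mul_of_nonneg_left h1 ha) (mul_le_mul_of_nonneg_left h2 hb)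
  rwa [hab, one_mul] at this

/-- Vertex-based reformulation of the robust DeeP-LCC constraints: for a convex
quadratic objective (with positive semidefinite `M`) and affine constraints in
`z ε = col(x_d, ε)`, validity over the polytope `W = convexHull ℝ S` is
equivalent to validity at the generating points (vertices) `S`. -/
theorem vertex_based_reformulation
    (k N q : ℕ)
    (M : Matrix (Fin (k + N)) (Fin (k + N)) ℝ) (hM : M.PosSemidef)
    (d : Fin (k + N) → ℝ)
    (P₁ : Matrix (Fin q) (Fin (k + N)) ℝ) (c₁ smin smax : Fin q → ℝ)
    (S : Set (Fin N → ℝ)) (hSfin : S.Finite) (hSne : S.Nonempty)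
    (xd : Fin k → ℝ) (t : ℝ)
    (z : (Fin N → ℝ) → Fin (k + N) → ℝ)
    (hz : ∀ ε, z ε = Fin.append xd ε) :
    (∀ ε ∈ convexHull ℝ S,
        (z ε) ⬝ᵥ M.mulVec (z ε) + d ⬝ᵥ (z ε) ≤ t ∧
        ∀ i : Fin q,
          smin i ≤ (P₁.mulVec (z ε) + c₁) i ∧ (P₁.mulVec (z ε) + c₁) i ≤ smax i) ↔
    (∀ ω ∈ S,
        (z ω) ⬝ᵥ M.mulVec (z ω) + d ⬝ᵥ (z ω) ≤ t ∧
        ∀ i : Fin q,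
          smin i ≤ (P₁.mulVec (z ω) + c₁) i ∧ (P₁.mulVec (z ω) + c₁) i ≤ smax i) := by
  constructor
  · intro h ω hω
    exact h ω (subset_convexHull ℝ S hω)
  · intro h
    set C : Set (Fin N → ℝ) := {ε |
        (z ε) ⬝ᵥ M.mulVec (z ε) + d ⬝ᵥ (z ε) ≤ t ∧
        ∀ i : Fin q,
          smin i ≤ (P₁.mulVec (z ε) + c₁) i ∧ (P₁.mulVec (z ε) + c₁) i ≤ smax i}
      with hC
    have hzaff : ∀ (a b : ℝ), a + b = 1 → ∀ ε ε' : Fin N → ℝ,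
        z (a • ε + b • ε') = a • z ε + b • z ε' := by
      intro a b hab ε ε'
      simp only [hz]
      funext i
      refine Fin.addCases (fun j => ?_) (fun j => ?_) i
      · simp only [Fin.append_left, Pi.add_apply, Pi.smul_apply, smul_eq_mul]
        linear_combination (xd j) * hab.symm
      · simp only [Fin.append_right, Pi.add_apply, Pi.smul_apply, smul_eq_mul]
    have hCconv : Convex ℝ C := by
      intro ε hε ε' hε' a b ha hb hab
      obtain ⟨hq1, hl1⟩ := hε
      obtain ⟨hq2, hl2⟩ := hε'
      have hzc := hzaff a b hab ε ε'
      set u := z ε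
      set v := z ε'
      constructor
      · rw [hzc]
        have hsym : u ⬝ᵥ M.mulVec v = v ⬝ᵥ M.mulVec u := by
          have hMt : Mᵀ = M := by simpa using hM.1.eq
          rw [dotProduct_mulVec, ← mulVec_transpose, hMt, dotProduct_comm]
        have hpsd : 0 ≤ (u - v) ⬝ᵥ M.mulVec (u - v) := by
          have := hM.dotProduct_mulVec_nonneg (u - v)
          simpa using this
        have hexp : (u - v) ⬝ᵥ M.mulVec (u - v)
            = u ⬝ᵥ M.mulVec u - 2 * (u ⬝ᵥ M.mulVec v) + v ⬝ᵥ M.mulVec v := by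
          simp only [sub_dotProduct, dotProduct_sub, mulVec_sub, hsym]
          ring
        have hpsd' : 0 ≤ u ⬝ᵥ M.mulVec u - 2 * (u ⬝ᵥ M.mulVec v) + v ⬝ᵥ M.mulVec v := by
          rw [← hexp]; exact hpsd
        have key : (a • u + b • v) ⬝ᵥ M.mulVec (a • u + b • v)
            = a * a * (u ⬝ᵥ M.mulVec u) + 2 * a * b * (u ⬝ᵥ M.mulVec v)
              + b * b * (v ⬝ᵥ M.mulVec v) := by
          simp only [add_dotProduct, dotProduct_add, mulVec_add, mulVec_smul,
            smul_dotProduct, dotProduct_smul, smul_eq_mul, hsym]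
          ring
        have hd : d ⬝ᵥ (a • u + b • v) = a * (d ⬝ᵥ u) + b * (d ⬝ᵥ v) := by
          simp only [dotProduct_add, dotProduct_smul, smul_eq_mul]
        rw [key, hd]
        exact quad_aux a b _ _ _ _ _ t ha hb hab hpsd' hq1 hq2
      · intro i
        rw [hzc]
        have hlin : (P₁.mulVec (a • u + b • v) + c₁) i
            = a * (P₁.mulVec u + c₁) i + b * (P₁.mulVec v + c₁) i := by
          simp only [mulVec_add, mulVec_smul, Pi.add_apply, Pi.smul_apply, smul_eq_mul]
          linear_combination (c₁ i) * hab.symm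
        obtain ⟨h1a, h1b⟩ := hl1 i
        obtain ⟨h2a, h2b⟩ := hl2 i
        rw [hlin]
        exact ⟨lo_aux a b _ _ _ ha hb hab h1a h2a, hi_aux a b _ _ _ ha hb hab h1b h2b⟩
    intro ε hε
    exact convexHull_min h hCconv hε
end

section
/- Consider the discrete-time linear time-invariant system x(k+1) = A x(k) + B u(k), y(k) = C x(k), with A ∈ ℝ^{ns×ns}, B ∈ ℝ^{ns×m}, C ∈ ℝ^{p×ns}. Assume the pair (A, B) is controllable, i.e., the controllability matrix [B, AB, ..., A^{ns-1}B] has rank ns. Let (u^d, y^d) be an input/output trajectory of length T of this system (i.e., there exists a state sequence x^d satisfying the recursions for k = 1, ..., T), and suppose u^d is persistently exciting of order L + ns, i.e., the Hankel matrix 𝓗_{L+ns}(u^d), whose (i,j) block entry is u^d(i+j-1), has full row rank. Then for any L-long input/output pair (u, y), (u, y) is a trajectory of the system (i.e., there exists a state sequence x with x(k+1) = A x(k) + B u(k) and y(k) = C x(k) for k = 1, ..., L) if and only if there exists g ∈ ℝ^{T-L+1} such that 𝓗_L(u^d) g = col(u(1), ..., u(L)) and 𝓗_L(y^d) g = col(y(1),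 ..., y(L)). -/
/-! A trajectory is fixed by its initial state and its input, and linear combinations of
time-shifted copies of the data are again trajectories. So everything rests on the stacked matrix
`[x^d(0) ⋯ x^d(T-L); 𝓗_L(u^d)]` having full row rank.

Let `(ζ, η)` be in its left kernel. Adding up the relations shifted by `s = 0, …, ns`, weighted
by the coefficients of the characteristic polynomial of `A`, the state terms cancel by
Cayley–Hamilton and what remains is a left-kernel vector of `𝓗_{L+ns}(u^d)`, hence zero by
persistent excitation. For the single sequence `η` reversed followed by `ζ Aⁱ B`, this says that
it satisfies the recurrence of the monic characteristic polynomial and starts with `ns` zeros;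
so it vanishes, which gives `η = 0` and `ζ [B, AB, …] = 0`, and controllability gives `ζ = 0`. -/

open Matrix

/-- Hankel matrix of depth `L` (with `T - L + 1` columns) associated with a
vector-valued signal `w`, 0-indexed: block entry `(i, j)` is `w (i + j)`. -/
def hankelMatrix (m L T : ℕ) (w : ℕ → Fin m → ℝ) :
    Matrix (Fin L × Fin m) (Fin (T - L + 1)) ℝ :=
  fun q j => w ((q.1 : ℕ) + (j : ℕ)) q.2

/-- `(u, y)` is an input/output trajectory of length `Len` of the LTI system
`x(k+1) = A x(k) + B u(k)`, `y(k) = C x(k)` (0-indexed time). -/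
def IsIOTrajectory (ns m p : ℕ)
    (A : Matrix (Fin ns) (Fin ns) ℝ) (B : Matrix (Fin ns) (Fin m) ℝ)
    (C : Matrix (Fin p) (Fin ns) ℝ)
    (u : ℕ → Fin m → ℝ) (y : ℕ → Fin p → ℝ) (Len : ℕ) : Prop :=
  ∃ x : ℕ → Fin ns → ℝ,
    (∀ k, k + 1 < Len → x (k + 1) = A.mulVec (x k) + B.mulVec (u k)) ∧
    (∀ k, k < Len → y k = C.mulVec (x k))

/-- Controllability matrix `[B, AB, …, A^{ns-1}B]` of the pair `(A, B)`. -/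
def ctrbMatrix (ns m : ℕ)
    (A : Matrix (Fin ns) (Fin ns) ℝ) (B : Matrix (Fin ns) (Fin m) ℝ) :
    Matrix (Fin ns) (Fin ns × Fin m) ℝ :=
  fun i q => (A ^ (q.1 : ℕ) * B) i q.2

open Finset

namespace Matrix

variable {K m n : Type*} [Field K] [Fintype m] [Fintype n]

theorem linearIndependent_row_iff_rank_eq_card {M : Matrix m n K} :
    LinearIndependent K M.row ↔ M.rank = Fintype.card m := by
  rw [rank_eq_finrank_span_row, linearIndependent_iff_card_eq_finrank_span, Set.finrank,
    eq_comm]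

theorem eq_zero_of_vecMul_eq_zero_of_rank_eq_card {M : Matrix m n K}
    (hM : M.rank = Fintype.card m) {v : m → K} (hv : v ᵥ* M = 0) : v = 0 :=
  vecMul_injective_iff.mpr (linearIndependent_row_iff_rank_eq_card.mpr hM)
    (hv.trans (zero_vecMul M).symm)

theorem rank_eq_card_of_vecMul_eq_zero {M : Matrix m n K}
    (hM : ∀ v : m → K, v ᵥ* M = 0 → v = 0) : M.rank = Fintype.card m := by
  refine linearIndependent_row_iff_rank_eq_card.mp (vecMul_injective_iff.mp fun v w hvw => ?_)
  exact sub_eq_zero.mp (hM _ (by rw [sub_vecMul]; exact sub_eq_zero.mpr hvw))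

theorem exists_mulVec_eq_of_rank_eq_card {M : Matrix m n K}
    (hM : M.rank = Fintype.card m) (b : m → K) : ∃ g, M *ᵥ g = b := by
  have hrange : LinearMap.range M.mulVecLin = ⊤ :=
    Submodule.eq_top_of_finrank_eq (by rw [← rank, hM, Module.finrank_fintype_fun_eq_card])
  exact LinearMap.mem_range.mp
    (hrange ▸ Submodule.mem_top : b ∈ LinearMap.range M.mulVecLin)

theorem sum_charpoly_coeff_smul_pow {R : Type*} [CommRing R] [Nontrivial R] [DecidableEq n]
    (A : Matrix n n R) {d : ℕ} (hd : Fintype.card n = d) :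
    ∑ s ∈ range (d + 1), A.charpoly.coeff s • A ^ s = 0 := by
  rw [← hd, ← charpoly_natDegree_eq_dim A, ← Polynomial.aeval_eq_sum_range,
    aeval_self_charpoly]

end Matrix

theorem Polynomial.Monic.eq_zero_of_forall_sum_coeff_smul_eq_zero {R M : Type*} [Ring R]
    [AddCommGroup M] [Module R M] {p : Polynomial R} (hp : p.Monic) {σ : ℕ → M}
    (hrec : ∀ n, ∑ s ∈ range (p.natDegree + 1), p.coeff s • σ (n + s) = 0)
    (hinit : ∀ n < p.natDegree, σ n = 0) (n : ℕ) : σ n = 0 := by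
  induction n using Nat.strong_induction_on with
  | _ n ih =>
    obtain hn | hn := lt_or_ge n p.natDegree
    · exact hinit n hn
    have hsum := hrec (n - p.natDegree)
    rwa [sum_range_succ, sum_eq_zero fun s hs => by rw [ih _ (by simp at hs; omega), smul_zero],
      Nat.sub_add_cancel hn, zero_add, ← Polynomial.leadingCoeff, hp.leadingCoeff,
      one_smul] at hsum

section StateSpace

variable {R n k : Type*} [CommRing R] [Fintype n] [Fintype k]
  {A : Matrix n n R} {B : Matrix n k R} {x : ℕ → n → R} {u : ℕ → k → R} {Len : ℕ}

theorem state_add_eq_pow_mulVec_add_sum [DecidableEq n]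
    (hx : ∀ i, i + 1 < Len → x (i + 1) = A *ᵥ x i + B *ᵥ u i) {j s : ℕ} (hjs : j + s < Len) :
    x (j + s) = A ^ s *ᵥ x j + ∑ i ∈ range s, (A ^ (s - 1 - i) * B) *ᵥ u (j + i) := by
  induction s with
  | zero => simp
  | succ s ih =>
    have hpow : ∀ i ∈ range s, A *ᵥ ((A ^ (s - 1 - i) * B) *ᵥ u (j + i))
        = (A ^ (s + 1 - 1 - i) * B) *ᵥ u (j + i) := fun i hi => by
      rw [mulVec_mulVec, ← Matrix.mul_assoc, ← pow_succ', show s - 1 - i + 1 = s + 1 - 1 - i by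
        simp at hi; omega]
    rw [← add_assoc, hx _ (by omega), ih (by omega), mulVec_add, mulVec_mulVec, ← pow_succ',
      mulVec_sum, sum_congr rfl hpow, sum_range_succ _ s, Nat.add_sub_cancel, Nat.sub_self,
      pow_zero, Matrix.one_mul, add_assoc]

theorem state_eq_of_initial_eq {x' : ℕ → n → R}
    (hx : ∀ i, i + 1 < Len → x (i + 1) = A *ᵥ x i + B *ᵥ u i)
    (hx' : ∀ i, i + 1 < Len → x' (i + 1) = A *ᵥ x' i + B *ᵥ u i) (h0 : x 0 = x' 0) :
    ∀ i < Len, x i = x' i := by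
  intro i hi
  induction i with
  | zero => exact h0
  | succ i ih => rw [hx i hi, hx' i hi, ih (by omega)]

theorem sum_smul_state_shift_succ {ι : Type*} [Fintype ι]
    (hx : ∀ i, i + 1 < Len → x (i + 1) = A *ᵥ x i + B *ᵥ u i) (g : ι → R) (τ : ι → ℕ) {k : ℕ}
    (hk : ∀ j, k + 1 + τ j < Len) :
    ∑ j, g j • x (k + 1 + τ j) = A *ᵥ ∑ j, g j • x (k + τ j) + B *ᵥ ∑ j, g j • u (k + τ j) := by
  simp only [mulVec_sum, mulVec_smul, ← sum_add_distrib, ← smul_add]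
  refine sum_congr rfl fun j _ => ?_
  rw [show k + 1 + τ j = k + τ j + 1 by omega, hx _ (by have := hk j; omega)]

theorem sum_smul_output_shift {p : Type*} {C : Matrix p n R} {y : ℕ → p → R}
    (hy : ∀ i < Len, y i = C *ᵥ x i) {ι : Type*} [Fintype ι] (g : ι → R) (τ : ι → ℕ) {k : ℕ}
    (hk : ∀ j, k + τ j < Len) :
    ∑ j, g j • y (k + τ j) = C *ᵥ ∑ j, g j • x (k + τ j) := by
  simp only [mulVec_sum, mulVec_smul]
  exact sum_congr rfl fun j _ => by rw [hy _ (hk j)]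

end StateSpace

section Hankel

variable {m L T : ℕ} (w : ℕ → Fin m → ℝ)

theorem hankelMatrix_mulVec_apply (g : Fin (T - L + 1) → ℝ) (q : Fin L × Fin m) :
    (hankelMatrix m L T w *ᵥ g) q = (∑ j, g j • w (q.1 + j)) q.2 := by
  simp only [mulVec, dotProduct, hankelMatrix, Finset.sum_apply, Pi.smul_apply, smul_eq_mul,
    mul_comm]

theorem hankelMatrix_mulVec_eq_iff (g : Fin (T - L + 1) → ℝ) (v : ℕ → Fin m → ℝ) :
    hankelMatrix m L T w *ᵥ g = (fun q => v q.1 q.2) ↔ ∀ k < L, ∑ j, g j • w (k + j) = v k := by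
  simp only [funext_iff, hankelMatrix_mulVec_apply, Prod.forall, Fin.forall_iff]

theorem vecMul_hankelMatrix_apply (v : Fin L × Fin m → ℝ) (j : Fin (T - L + 1)) :
    (v ᵥ* hankelMatrix m L T w) j = ∑ t : Fin L, (fun r => v (t, r)) ⬝ᵥ w (j + t) := by
  simp only [vecMul, dotProduct, hankelMatrix, Fintype.sum_prod_type, add_comm]

theorem eq_zero_of_forall_sum_dotProduct_eq_zero {N : ℕ}
    (hPE : (hankelMatrix m N T w).rank = N * m) (hNT : N ≤ T) {θ : ℕ → Fin m → ℝ}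
    (hθ : ∀ j, j + N ≤ T → ∑ t ∈ range N, θ t ⬝ᵥ w (j + t) = 0) {t : ℕ} (ht : t < N) :
    θ t = 0 := by
  have hker : (fun q : Fin N × Fin m => θ q.1 q.2) ᵥ* hankelMatrix m N T w = 0 := by
    funext j
    rw [vecMul_hankelMatrix_apply, Fin.sum_univ_eq_sum_range (fun t => θ t ⬝ᵥ w (j + t))]
    exact hθ j (by omega)
  funext r
  exact congrFun (eq_zero_of_vecMul_eq_zero_of_rank_eq_card (by simpa using hPE) hker)
    (⟨t, ht⟩, r)

end Hankel

section LeftKernel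

variable {ns m T L : ℕ} {A : Matrix (Fin ns) (Fin ns) ℝ} {B : Matrix (Fin ns) (Fin m) ℝ}
  {ud : ℕ → Fin m → ℝ} {xd : ℕ → Fin ns → ℝ} {ζ : Fin ns → ℝ} {η : ℕ → Fin m → ℝ}

def relationSeq (L : ℕ) (A : Matrix (Fin ns) (Fin ns) ℝ) (B : Matrix (Fin ns) (Fin m) ℝ)
    (ζ : Fin ns → ℝ) (η : ℕ → Fin m → ℝ) (n : ℕ) : Fin m → ℝ :=
  if n < L + ns then η (L + ns - 1 - n) else ζ ᵥ* (A ^ (n - (L + ns)) * B)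

theorem sum_relationSeq_dotProduct (hL : 0 < L)
    (hxd : ∀ k, k + 1 < T → xd (k + 1) = A *ᵥ xd k + B *ᵥ ud k)
    (hηL : ∀ k, L ≤ k → η k = 0)
    (hrel : ∀ j, j + L ≤ T → ζ ⬝ᵥ xd j + ∑ k ∈ range L, η k ⬝ᵥ ud (j + k) = 0)
    {s j : ℕ} (hs : s ≤ ns) (hj : j + (L + ns) ≤ T) :
    ∑ t ∈ range (L + ns), relationSeq L A B ζ η (L + ns - 1 - t + s) ⬝ᵥ ud (j + t)
      = -((ζ ᵥ* A ^ s) ⬝ᵥ xd j) := by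
  rw [← sum_range_add_sum_Ico _ (show s ≤ L + ns by omega)]
  have hbefore : ∑ t ∈ range s, relationSeq L A B ζ η (L + ns - 1 - t + s) ⬝ᵥ ud (j + t)
      = ζ ⬝ᵥ xd (j + s) - (ζ ᵥ* A ^ s) ⬝ᵥ xd j := by
    have hterm : ∀ t ∈ range s, relationSeq L A B ζ η (L + ns - 1 - t + s) ⬝ᵥ ud (j + t)
        = ζ ⬝ᵥ ((A ^ (s - 1 - t) * B) *ᵥ ud (j + t)) := fun t ht => by
      simp only [mem_range] at ht
      rw [relationSeq, if_neg (by omega),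
        show L + ns - 1 - t + s - (L + ns) = s - 1 - t by omega, dotProduct_mulVec]
    rw [sum_congr rfl hterm, ← dotProduct_sum, state_add_eq_pow_mulVec_add_sum hxd (by omega),
      dotProduct_add, dotProduct_mulVec]
    ring
  have hafter : ∑ t ∈ Ico s (L + ns), relationSeq L A B ζ η (L + ns - 1 - t + s) ⬝ᵥ ud (j + t)
      = -(ζ ⬝ᵥ xd (j + s)) := by
    have hterm : ∀ k ∈ range (L + ns - s),
        relationSeq L A B ζ η (L + ns - 1 - (s + k) + s) ⬝ᵥ ud (j + (s + k))
          = η k ⬝ᵥ ud (j + s + k) := fun k hk => by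
      simp only [mem_range] at hk
      rw [relationSeq, if_pos (by omega),
        show L + ns - 1 - (L + ns - 1 - (s + k) + s) = k by omega, add_assoc]
    rw [sum_Ico_eq_sum_range, sum_congr rfl hterm,
      ← sum_range_add_sum_Ico _ (show L ≤ L + ns - s by omega),
      sum_eq_zero (s := Ico L _) fun k hk => by rw [hηL k (mem_Ico.mp hk).1, zero_dotProduct],
      add_zero]
    linarith [hrel (j + s) (by omega)]
  rw [hbefore, hafter]
  ring

theorem sum_charpoly_coeff_smul_relationSeq_of_lt (hL : 0 < L) (hLT : L + ns ≤ T)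
    (hxd : ∀ k, k + 1 < T → xd (k + 1) = A *ᵥ xd k + B *ᵥ ud k)
    (hPE : (hankelMatrix m (L + ns) T ud).rank = (L + ns) * m)
    (hηL : ∀ k, L ≤ k → η k = 0)
    (hrel : ∀ j, j + L ≤ T → ζ ⬝ᵥ xd j + ∑ k ∈ range L, η k ⬝ᵥ ud (j + k) = 0)
    {n : ℕ} (hn : n < L + ns) :
    ∑ s ∈ range (ns + 1), A.charpoly.coeff s • relationSeq L A B ζ η (n + s) = 0 := by
  set θ : ℕ → Fin m → ℝ := fun t =>
    ∑ s ∈ range (ns + 1), A.charpoly.coeff s • relationSeq L A B ζ η (L + ns - 1 - t + s)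
  have hwindow : ∀ j, j + (L + ns) ≤ T → ∑ t ∈ range (L + ns), θ t ⬝ᵥ ud (j + t) = 0 := by
    intro j hj
    calc ∑ t ∈ range (L + ns), θ t ⬝ᵥ ud (j + t)
        = ∑ s ∈ range (ns + 1), A.charpoly.coeff s * ∑ t ∈ range (L + ns),
            relationSeq L A B ζ η (L + ns - 1 - t + s) ⬝ᵥ ud (j + t) := by
          simp only [θ, sum_dotProduct, smul_dotProduct, smul_eq_mul, mul_sum]
          exact sum_comm
      _ = -((ζ ᵥ* ∑ s ∈ range (ns + 1), A.charpoly.coeff s • A ^ s) ⬝ᵥ xd j) := by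
          simp only [vecMul_sum, vecMul_smul, sum_dotProduct, smul_dotProduct, smul_eq_mul,
            ← sum_neg_distrib]
          exact sum_congr rfl fun s hs => by
            rw [sum_relationSeq_dotProduct hL hxd hηL hrel (by simp at hs; omega) hj, mul_neg]
      _ = 0 := by
          rw [sum_charpoly_coeff_smul_pow A (Fintype.card_fin ns), vecMul_zero,
            zero_dotProduct, neg_zero]
  simpa only [θ, show L + ns - 1 - (L + ns - 1 - n) = n by omega] using
    eq_zero_of_forall_sum_dotProduct_eq_zero ud hPE hLT hwindow (t := L + ns - 1 - n) (by omega)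

theorem sum_charpoly_coeff_smul_relationSeq_of_le {n : ℕ} (hn : L + ns ≤ n) :
    ∑ s ∈ range (ns + 1), A.charpoly.coeff s • relationSeq L A B ζ η (n + s) = 0 := by
  have hterm : ∀ s ∈ range (ns + 1), A.charpoly.coeff s • relationSeq L A B ζ η (n + s)
      = ζ ᵥ* (A ^ (n - (L + ns)) * (A.charpoly.coeff s • A ^ s) * B) := fun s _ => by
    rw [relationSeq, if_neg (by omega), Matrix.mul_smul, Matrix.smul_mul, vecMul_smul, ← pow_add,
      show n - (L + ns) + s = n + s - (L + ns) by omega]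
  rw [sum_congr rfl hterm, ← vecMul_sum, ← Matrix.sum_mul, ← Matrix.mul_sum,
    sum_charpoly_coeff_smul_pow A (Fintype.card_fin ns), Matrix.mul_zero, Matrix.zero_mul,
    vecMul_zero]

theorem relationSeq_eq_zero (hL : 0 < L) (hLT : L + ns ≤ T)
    (hxd : ∀ k, k + 1 < T → xd (k + 1) = A *ᵥ xd k + B *ᵥ ud k)
    (hPE : (hankelMatrix m (L + ns) T ud).rank = (L + ns) * m)
    (hηL : ∀ k, L ≤ k → η k = 0)
    (hrel : ∀ j, j + L ≤ T → ζ ⬝ᵥ xd j + ∑ k ∈ range L, η k ⬝ᵥ ud (j + k) = 0) (n : ℕ) :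
    relationSeq L A B ζ η n = 0 := by
  have hdeg : A.charpoly.natDegree = ns := by simp
  refine A.charpoly_monic.eq_zero_of_forall_sum_coeff_smul_eq_zero
    (fun n => ?_) (fun n hn => ?_) n
  · rw [hdeg]
    obtain hn | hn := lt_or_ge n (L + ns)
    · exact sum_charpoly_coeff_smul_relationSeq_of_lt hL hLT hxd hPE hηL hrel hn
    · exact sum_charpoly_coeff_smul_relationSeq_of_le hn
  · rw [relationSeq, if_pos (by omega)]
    exact hηL _ (by omega)

theorem eq_zero_of_window_relation (hL : 0 < L) (hLT : L + ns ≤ T)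
    (hctrb : (ctrbMatrix ns m A B).rank = ns)
    (hxd : ∀ k, k + 1 < T → xd (k + 1) = A *ᵥ xd k + B *ᵥ ud k)
    (hPE : (hankelMatrix m (L + ns) T ud).rank = (L + ns) * m)
    (hηL : ∀ k, L ≤ k → η k = 0)
    (hrel : ∀ j, j + L ≤ T → ζ ⬝ᵥ xd j + ∑ k ∈ range L, η k ⬝ᵥ ud (j + k) = 0) :
    ζ = 0 ∧ ∀ k, η k = 0 := by
  have hσ := relationSeq_eq_zero hL hLT hxd hPE hηL hrel
  refine ⟨eq_zero_of_vecMul_eq_zero_of_rank_eq_card (by simpa using hctrb) ?_, fun k => ?_⟩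
  · funext q
    have hq := hσ (L + ns + q.1)
    rw [relationSeq, if_neg (by omega), Nat.add_sub_cancel_left] at hq
    exact congrFun hq q.2
  · obtain hk | hk := lt_or_ge k L
    · have hk' := hσ (L + ns - 1 - k)
      rwa [relationSeq, if_pos (by omega), show L + ns - 1 - (L + ns - 1 - k) = k by omega] at hk'
    · exact hηL k hk

end LeftKernel

section Representation

variable {ns m T L : ℕ} {A : Matrix (Fin ns) (Fin ns) ℝ} {B : Matrix (Fin ns) (Fin m) ℝ}
  {ud : ℕ → Fin m → ℝ} {xd : ℕ → Fin ns → ℝ}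

theorem rank_fromRows_state_hankelMatrix (hL : 0 < L) (hLT : L + ns ≤ T)
    (hctrb : (ctrbMatrix ns m A B).rank = ns)
    (hxd : ∀ k, k + 1 < T → xd (k + 1) = A *ᵥ xd k + B *ᵥ ud k)
    (hPE : (hankelMatrix m (L + ns) T ud).rank = (L + ns) * m) :
    (fromRows (of fun i (j : Fin (T - L + 1)) => xd j i) (hankelMatrix m L T ud)).rank
      = ns + L * m := by
  refine (rank_eq_card_of_vecMul_eq_zero fun v hv => ?_).trans (by simp)
  set η : ℕ → Fin m → ℝ := fun k => if h : k < L then fun r => v (Sum.inr (⟨k, h⟩, r)) else 0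
  have hrel : ∀ j, j + L ≤ T →
      (v ∘ Sum.inl) ⬝ᵥ xd j + ∑ k ∈ range L, η k ⬝ᵥ ud (j + k) = 0 := by
    intro j hj
    have hj' := congrFun hv ⟨j, by omega⟩
    rw [vecMul_fromRows, Pi.add_apply, vecMul_hankelMatrix_apply] at hj'
    rw [← Fin.sum_univ_eq_sum_range (fun k => η k ⬝ᵥ ud (j + k))]
    simpa [η, vecMul, dotProduct] using hj'
  obtain ⟨hζ, hη⟩ :=
    eq_zero_of_window_relation hL hLT hctrb hxd hPE (fun k hk => dif_neg (by omega)) hrel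
  funext i
  rcases i with i | ⟨k, r⟩
  · exact congrFun hζ i
  · simpa [η] using congrFun (hη k) r

theorem exists_hankel_combination_eq (hLT : L + ns ≤ T)
    (hctrb : (ctrbMatrix ns m A B).rank = ns)
    (hxd : ∀ k, k + 1 < T → xd (k + 1) = A *ᵥ xd k + B *ᵥ ud k)
    (hPE : (hankelMatrix m (L + ns) T ud).rank = (L + ns) * m)
    {x : ℕ → Fin ns → ℝ} {u : ℕ → Fin m → ℝ}
    (hx : ∀ k, k + 1 < L → x (k + 1) = A *ᵥ x k + B *ᵥ u k) :
    ∃ g : Fin (T - L + 1) → ℝ,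
      ∀ k < L, ∑ j, g j • xd (k + j) = x k ∧ ∑ j, g j • ud (k + j) = u k := by
  -- For `L = 0` the stacked matrix would contain the unconstrained state `x^d(T)`.
  rcases Nat.eq_zero_or_pos L with rfl | hL
  · exact ⟨0, fun k hk => absurd hk (Nat.not_lt_zero k)⟩
  obtain ⟨g, hg⟩ := exists_mulVec_eq_of_rank_eq_card
    ((rank_fromRows_state_hankelMatrix hL hLT hctrb hxd hPE).trans (by simp))
    (Sum.elim (x 0) fun q => u q.1 q.2)
  have hgu := (hankelMatrix_mulVec_eq_iff ud g u).mp (funext fun q => congrFun hg (Sum.inr q))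
  have hgx : ∑ j, g j • xd (0 + j) = x 0 := by
    funext i
    simpa [mulVec, dotProduct, mul_comm] using congrFun hg (Sum.inl i)
  refine ⟨g, fun k hk => ⟨?_, hgu k hk⟩⟩
  refine state_eq_of_initial_eq (x := fun k => ∑ j, g j • xd (k + j)) (fun k hk => ?_) hx hgx
    k hk
  rw [← hgu k (by omega)]
  exact sum_smul_state_shift_succ hxd g Fin.val fun j => by omega

end Representation

/-- Willems' fundamental lemma (data-driven representation used by DeeP-LCC):
for a controllable LTI system and pre-collected data `(u^d, y^d)` of length `T`
whose input is persistently exciting of order `L + ns`, a length-`L` pair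
`(u, y)` is a system trajectory iff it is a linear combination (via `g`) of the
columns of the depth-`L` Hankel matrices of the data. -/
theorem fundamental_lemma_data_driven_representation
    (ns m p T L : ℕ) (hLT : L + ns < T)
    (A : Matrix (Fin ns) (Fin ns) ℝ) (B : Matrix (Fin ns) (Fin m) ℝ)
    (C : Matrix (Fin p) (Fin ns) ℝ)
    (hctrb : (ctrbMatrix ns m A B).rank = ns)
    (ud : ℕ → Fin m → ℝ) (yd : ℕ → Fin p → ℝ)
    (hdata : IsIOTrajectory ns m p A B C ud yd T)
    (hPE : (hankelMatrix m (L + ns) T ud).rank = (L + ns) * m)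
    (u : ℕ → Fin m → ℝ) (y : ℕ → Fin p → ℝ) :
    IsIOTrajectory ns m p A B C u y L ↔
      ∃ g : Fin (T - L + 1) → ℝ,
        (hankelMatrix m L T ud).mulVec g = (fun q => u (q.1 : ℕ) q.2) ∧
        (hankelMatrix p L T yd).mulVec g = (fun q => y (q.1 : ℕ) q.2) := by
  obtain ⟨xd, hxd, hyd⟩ := hdata
  simp only [hankelMatrix_mulVec_eq_iff]
  constructor
  · rintro ⟨x, hx, hy⟩
    obtain ⟨g, hg⟩ := exists_hankel_combination_eq hLT.le hctrb hxd hPE hx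
    refine ⟨g, fun k hk => (hg k hk).2, fun k hk => ?_⟩
    rw [sum_smul_output_shift hyd g Fin.val fun j => by omega, (hg k hk).1, hy k hk]
  · rintro ⟨g, hgu, hgy⟩
    refine ⟨fun k => ∑ j, g j • xd (k + j), fun k hk => ?_, fun k hk => ?_⟩
    · rw [← hgu k (by omega)]
      exact sum_smul_state_shift_succ hxd g Fin.val fun j => by omega
    · rw [← hgy k hk]
      exact sum_smul_output_shift hyd g Fin.val fun j => by omega
end
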